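/- arXiv:2206.11965 — 2 statements merged into one kernel-verified Lean document; each statement's English description precedes it below -/
import Mathlib

section
/- Let μ > 0, λ > −2μ, k ∈ ℂ, and let φ : ℝ² → ℂ be twice continuously differentiable and satisfy the Helmholtz equation Δφ + k²φ = 0 on ℝ². Then the stress tensor of the vector-curl field curl⃗ φ satisfies σ(curl⃗ φ) = 2μ (Hφ) Q + μ k² φ Q on ℝ², where Hφ is the Hessian matrix of φ and Q is the 2×2 matrix with rows (0, −1) and (1, 0). -/
/-! By the symmetry of second derivatives, `curl⃗ φ = (∂₂φ, -∂₁φ)` is divergence-free, so the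
`λ (div u) I₂` part of the stress vanishes and the diagonal entries are `±2μ ∂₁∂₂φ`. The shear
entry is `μ (∂₂²φ - ∂₁²φ)`, and the Helmholtz equation `∂₁²φ + ∂₂²φ = -k²φ` rewrites it as
either `-2μ ∂₁²φ - μk²φ` or `2μ ∂₂²φ + μk²φ`, the two off-diagonal entries of `2μ (Hφ) Q + μk²φ Q`.
-/

noncomputable section

open Real

/-- Partial derivative in the first coordinate direction. -/
def pd1 (f : ℝ × ℝ → ℂ) (x : ℝ × ℝ) : ℂ := fderiv ℝ f x (1, 0)
/-- Partial derivative in the second coordinate direction. -/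
def pd2 (f : ℝ × ℝ → ℂ) (x : ℝ × ℝ) : ℂ := fderiv ℝ f x (0, 1)
/-- Laplacian of a scalar field on ℝ². -/
def lap (f : ℝ × ℝ → ℂ) (x : ℝ × ℝ) : ℂ := pd1 (pd1 f) x + pd2 (pd2 f) x
/-- Divergence of the vector field (u1, u2). -/
def divU (u1 u2 : ℝ × ℝ → ℂ) (x : ℝ × ℝ) : ℂ := pd1 u1 x + pd2 u2 x
/-- Scalar curl of the vector field (u1, u2). -/
def curlU (u1 u2 : ℝ × ℝ → ℂ) (x : ℝ × ℝ) : ℂ := pd1 u2 x - pd2 u1 x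

/-- (1,1)-entry of the stress tensor σ(u) = 2μ ε(u) + λ (div u) I₂. -/
def sig11 (μ lam : ℝ) (u1 u2 : ℝ × ℝ → ℂ) (x : ℝ × ℝ) : ℂ :=
  2 * (μ : ℂ) * pd1 u1 x + (lam : ℂ) * divU u1 u2 x
/-- (1,2)-entry (= (2,1)-entry) of the stress tensor. -/
def sig12 (μ : ℝ) (u1 u2 : ℝ × ℝ → ℂ) (x : ℝ × ℝ) : ℂ :=
  (μ : ℂ) * (pd1 u2 x + pd2 u1 x)
/-- (2,2)-entry of the stress tensor. -/
def sig22 (μ lam : ℝ) (u1 u2 : ℝ × ℝ → ℂ) (x : ℝ × ℝ) : ℂ :=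
  2 * (μ : ℂ) * pd2 u2 x + (lam : ℂ) * divU u1 u2 x

theorem fderiv_fderiv_apply_comm {E F : Type*} [NormedAddCommGroup E] [NormedSpace ℝ E]
    [NormedAddCommGroup F] [NormedSpace ℝ F] {f : E → F} {x : E} (hf : ContDiffAt ℝ 2 f x)
    (v w : E) :
    fderiv ℝ (fun y => fderiv ℝ f y v) x w = fderiv ℝ (fun y => fderiv ℝ f y w) x v := by
  have hf' : DifferentiableAt ℝ (fderiv ℝ f) x :=
    (hf.fderiv_right (m := 1) (by norm_num)).differentiableAt (by norm_num)
  rw [fderiv_clm_apply hf' (differentiableAt_const v),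
    fderiv_clm_apply hf' (differentiableAt_const w)]
  simpa using (hf.isSymmSndFDerivAt (by simp)).eq w v

theorem pd1_pd2_comm {φ : ℝ × ℝ → ℂ} {x : ℝ × ℝ} (hφ : ContDiffAt ℝ 2 φ x) :
    pd1 (pd2 φ) x = pd2 (pd1 φ) x :=
  fderiv_fderiv_apply_comm hφ (0, 1) (1, 0)

theorem pd1_neg (f : ℝ × ℝ → ℂ) (x : ℝ × ℝ) : pd1 (fun y => -f y) x = -pd1 f x := by
  simp [pd1, fderiv_fun_neg]

theorem pd2_neg (f : ℝ × ℝ → ℂ) (x : ℝ × ℝ) : pd2 (fun y => -f y) x = -pd2 f x := by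
  simp [pd2, fderiv_fun_neg]

theorem divU_curl_eq_zero {φ : ℝ × ℝ → ℂ} {x : ℝ × ℝ} (hφ : ContDiffAt ℝ 2 φ x) :
    divU (pd2 φ) (fun y => -pd1 φ y) x = 0 := by
  rw [divU, pd2_neg, pd1_pd2_comm hφ, add_neg_cancel]

section StressOfCurl

variable (μ lam : ℝ) {φ : ℝ × ℝ → ℂ} {x : ℝ × ℝ}

theorem sig11_curl (hφ : ContDiffAt ℝ 2 φ x) :
    sig11 μ lam (pd2 φ) (fun y => -pd1 φ y) x = 2 * (μ : ℂ) * pd1 (pd2 φ) x := by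
  rw [sig11, divU_curl_eq_zero hφ, mul_zero, add_zero]

theorem sig22_curl (hφ : ContDiffAt ℝ 2 φ x) :
    sig22 μ lam (pd2 φ) (fun y => -pd1 φ y) x = -(2 * (μ : ℂ) * pd2 (pd1 φ) x) := by
  rw [sig22, divU_curl_eq_zero hφ, pd2_neg]
  ring

theorem sig12_curl :
    sig12 μ (pd2 φ) (fun y => -pd1 φ y) x = (μ : ℂ) * (pd2 (pd2 φ) x - pd1 (pd1 φ) x) := by
  rw [sig12, pd1_neg]
  ring

end StressOfCurl

theorem stmt9_general (μ lam : ℝ) (k : ℂ)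
    (φ : ℝ × ℝ → ℂ) (hφ : ContDiff ℝ 2 φ)
    (hH : ∀ x, lap φ x + k ^ 2 * φ x = 0) :
    ∀ x,
      sig11 μ lam (pd2 φ) (fun y => -pd1 φ y) x = 2 * (μ : ℂ) * pd1 (pd2 φ) x
      ∧ sig12 μ (pd2 φ) (fun y => -pd1 φ y) x
          = -(2 * (μ : ℂ) * pd1 (pd1 φ) x) - (μ : ℂ) * k ^ 2 * φ x
      ∧ sig12 μ (pd2 φ) (fun y => -pd1 φ y) x
          = 2 * (μ : ℂ) * pd2 (pd2 φ) x + (μ : ℂ) * k ^ 2 * φ x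
      ∧ sig22 μ lam (pd2 φ) (fun y => -pd1 φ y) x = -(2 * (μ : ℂ) * pd2 (pd1 φ) x) := by
  intro x
  have helmholtz := hH x
  rw [lap] at helmholtz
  refine ⟨sig11_curl μ lam hφ.contDiffAt, ?_, ?_, sig22_curl μ lam hφ.contDiffAt⟩
  · rw [sig12_curl]
    linear_combination (μ : ℂ) * helmholtz
  · rw [sig12_curl]
    linear_combination -(μ : ℂ) * helmholtz

/-- If φ is a C² solution of Δφ + k²φ = 0, then σ(curl⃗ φ) = 2μ (Hφ)Q + μk²φ Q,
where Q has rows (0,−1) and (1,0); stated entrywise. -/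
theorem stmt9 (μ lam : ℝ) (hμ : 0 < μ) (hlam : -(2 * μ) < lam) (k : ℂ)
    (φ : ℝ × ℝ → ℂ) (hφ : ContDiff ℝ 2 φ)
    (hH : ∀ x, lap φ x + k ^ 2 * φ x = 0) :
    ∀ x,
      sig11 μ lam (pd2 φ) (fun y => -pd1 φ y) x = 2 * (μ : ℂ) * pd1 (pd2 φ) x
      ∧ sig12 μ (pd2 φ) (fun y => -pd1 φ y) x
          = -(2 * (μ : ℂ) * pd1 (pd1 φ) x) - (μ : ℂ) * k ^ 2 * φ x
      ∧ sig12 μ (pd2 φ) (fun y => -pd1 φ y) x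
          = 2 * (μ : ℂ) * pd2 (pd2 φ) x + (μ : ℂ) * k ^ 2 * φ x
      ∧ sig22 μ lam (pd2 φ) (fun y => -pd1 φ y) x = -(2 * (μ : ℂ) * pd2 (pd1 φ) x) :=
  stmt9_general μ lam k φ hφ hH
end
end

section
/- For every nonzero integer m, the Kussmaul–Martensen quadrature identity holds: −(1/(2π)) ∫₀^{2π} log(sin²(τ/2)) cos(mτ) dτ = 1/|m|. -/
/-!
With `n = |m|`, the function `F τ = sin (n τ) * log (sin (τ / 2))` has derivative
`n * log (sin (τ / 2)) * cos (n τ) + sin (n τ) * cos (τ / 2) / (2 * sin (τ / 2))` on `(0, 2π)`.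
The quotient `sin (n τ) / sin (τ / 2) = ∑_{k < n} 2 cos ((k + 1/2) τ)` is a trigonometric
polynomial, so the second summand integrates to `π`, and `F = (quotient) * (s * log s)` with
`s = sin (τ / 2)` is continuous because `x * log x` is, and vanishes at both ends. Hence
`n * ∫ log (sin (τ / 2)) * cos (n τ) = -π`, and `log (sin² (τ / 2)) = 2 log (sin (τ / 2))`.
-/

open Real Finset MeasureTheory

/-- `sin (n τ) / sin (τ / 2)`, written as a trigonometric polynomial so that it stays defined and
continuous at the zeros of `sin (τ / 2)`. -/
noncomputable def sinNatMulDivSinHalf (n : ℕ) (τ : ℝ) : ℝ :=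
  ∑ k ∈ range n, 2 * cos ((k + 1 / 2) * τ)

theorem continuous_sinNatMulDivSinHalf (n : ℕ) : Continuous (sinNatMulDivSinHalf n) := by
  unfold sinNatMulDivSinHalf
  fun_prop

theorem sin_nat_mul_eq_sin_half_mul_sinNatMulDivSinHalf (n : ℕ) (τ : ℝ) :
    sin (n * τ) = sin (τ / 2) * sinNatMulDivSinHalf n τ := by
  induction n with
  | zero => simp [sinNatMulDivSinHalf]
  | succ n ih =>
    have step := sin_sub_sin ((n + 1) * τ) (n * τ)
    rw [show ((n : ℝ) + 1) * τ - n * τ = τ by ring,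
      show ((n : ℝ) + 1) * τ + n * τ = 2 * ((n + 1 / 2) * τ) by ring,
      mul_div_cancel_left₀ _ two_ne_zero] at step
    rw [sinNatMulDivSinHalf, sum_range_succ, ← sinNatMulDivSinHalf, mul_add, ← ih]
    push_cast
    linarith

theorem cos_half_mul_sinNatMulDivSinHalf (n : ℕ) (τ : ℝ) :
    cos (τ / 2) * sinNatMulDivSinHalf n τ = ∑ k ∈ range n, (cos (k * τ) + cos ((k + 1) * τ)) := by
  rw [sinNatMulDivSinHalf, mul_sum]
  refine sum_congr rfl fun k _ => ?_
  rw [cos_add_cos, show ((k : ℝ) * τ - (k + 1) * τ) / 2 = -(τ / 2) by ring, cos_neg]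
  ring_nf

theorem integral_cos_nat_mul_zero_two_pi (k : ℕ) :
    ∫ τ in (0 : ℝ)..2 * π, cos (k * τ) = if k = 0 then 2 * π else 0 := by
  split_ifs with hk
  · simp [hk]
  · have hk' : (k : ℝ) ≠ 0 := by exact_mod_cast hk
    rw [intervalIntegral.integral_comp_mul_left (fun x => cos x) hk', integral_cos,
      show (k : ℝ) * (2 * π) = (2 * k : ℕ) * π by push_cast; ring, sin_nat_mul_pi]
    simp

theorem integral_cos_half_mul_sinNatMulDivSinHalf {n : ℕ} (hn : n ≠ 0) :
    ∫ τ in (0 : ℝ)..2 * π, cos (τ / 2) * sinNatMulDivSinHalf n τ = 2 * π := by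
  have hterm (k : ℕ) : ∫ τ in (0 : ℝ)..2 * π, (cos (k * τ) + cos ((k + 1) * τ)) =
      if k = 0 then 2 * π else 0 := by
    rw [intervalIntegral.integral_add ((by fun_prop : Continuous _).intervalIntegrable _ _)
      ((by fun_prop : Continuous _).intervalIntegrable _ _), integral_cos_nat_mul_zero_two_pi,
      ← Nat.cast_succ, integral_cos_nat_mul_zero_two_pi]
    simp
  simp_rw [cos_half_mul_sinNatMulDivSinHalf]
  rw [intervalIntegral.integral_finsetSum fun k _ => (by fun_prop : Continuous _).intervalIntegrable _ _]
  simp [hterm, Nat.pos_of_ne_zero hn]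

theorem intervalIntegrable_log_sin_half (a b : ℝ) :
    IntervalIntegrable (fun τ => log (sin (τ / 2))) volume a b := by
  simpa [div_eq_mul_inv, mul_comm] using
    (intervalIntegrable_log_sin (a := a / 2) (b := b / 2)).comp_mul_right (c := 2⁻¹)

theorem continuous_sin_nat_mul_mul_log_sin_half (n : ℕ) :
    Continuous fun τ => sin (n * τ) * log (sin (τ / 2)) := by
  have hfactor : (fun τ => sin (n * τ) * log (sin (τ / 2))) =
      fun τ => sinNatMulDivSinHalf n τ * (sin (τ / 2) * log (sin (τ / 2))) := by
    funext τ
    rw [sin_nat_mul_eq_sin_half_mul_sinNatMulDivSinHalf]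
    ring
  rw [hfactor]
  exact (continuous_sinNatMulDivSinHalf n).mul (by fun_prop)

theorem hasDerivAt_sin_nat_mul_mul_log_sin_half (n : ℕ) {τ : ℝ} (hτ : sin (τ / 2) ≠ 0) :
    HasDerivAt (fun x => sin (n * x) * log (sin (x / 2)))
      (n * (log (sin (τ / 2)) * cos (n * τ)) + cos (τ / 2) * sinNatMulDivSinHalf n τ / 2) τ := by
  have hsin : HasDerivAt (fun x => sin (n * x)) (cos (n * τ) * n) τ := by
    simpa using ((hasDerivAt_id τ).const_mul (n : ℝ)).sin
  have hlog : HasDerivAt (fun x => log (sin (x / 2))) (cos (τ / 2) * (1 / 2) / sin (τ / 2)) τ :=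
    ((hasDerivAt_id τ).div_const 2).sin.log hτ |>.congr_deriv (by simp)
  refine (hsin.mul hlog).congr_deriv ?_
  rw [sin_nat_mul_eq_sin_half_mul_sinNatMulDivSinHalf]
  field_simp

theorem integral_log_sin_half_mul_cos_nat_mul {n : ℕ} (hn : n ≠ 0) :
    ∫ τ in (0 : ℝ)..2 * π, log (sin (τ / 2)) * cos (n * τ) = -(π / n) := by
  have hderiv (τ : ℝ) (hτ : τ ∈ Set.Ioo 0 (2 * π)) :=
    hasDerivAt_sin_nat_mul_mul_log_sin_half n (τ := τ)
      (sin_pos_of_pos_of_lt_pi (by linarith [hτ.1]) (by linarith [hτ.2])).ne'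
  have hint_log : IntervalIntegrable (fun τ => log (sin (τ / 2)) * cos (n * τ)) volume 0 (2 * π) :=
    (intervalIntegrable_log_sin_half _ _).mul_continuousOn (by fun_prop)
  have hint_quot : IntervalIntegrable (fun τ => cos (τ / 2) * sinNatMulDivSinHalf n τ / 2)
      volume 0 (2 * π) :=
    (((continuous_sinNatMulDivSinHalf n).intervalIntegrable _ _).continuousOn_mul
      (by fun_prop)).div_const 2
  have hftc := intervalIntegral.integral_eq_sub_of_hasDerivAt_of_le (by positivity)
    (continuous_sin_nat_mul_mul_log_sin_half n).continuousOn hderiv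
    ((hint_log.const_mul _).add hint_quot)
  rw [intervalIntegral.integral_add (hint_log.const_mul _) hint_quot, intervalIntegral.integral_const_mul, intervalIntegral.integral_div,
    integral_cos_half_mul_sinNatMulDivSinHalf hn] at hftc
  have hsin : sin (n * (2 * π)) = 0 := by
    rw [show (n : ℝ) * (2 * π) = (2 * n : ℕ) * π by push_cast; ring, sin_nat_mul_pi]
  simp only [hsin, mul_zero, zero_mul, sin_zero, sub_zero] at hftc
  rw [← neg_div, eq_div_iff (by exact_mod_cast hn)]
  linarith

/-- Kussmaul–Martensen quadrature identity:
−(1/(2π)) ∫₀^{2π} log(sin²(τ/2)) cos(mτ) dτ = 1/|m| for every nonzero integer m. -/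
theorem stmt16 (m : ℤ) (hm : m ≠ 0) :
    -(1 / (2 * π)) * ∫ τ in (0 : ℝ)..(2 * π),
        Real.log ((Real.sin (τ / 2)) ^ 2) * Real.cos ((m : ℝ) * τ)
      = 1 / |(m : ℝ)| := by
  have hcos (τ : ℝ) : cos (m * τ) = cos (m.natAbs * τ) := by
    rw [Nat.cast_natAbs, Int.cast_abs]
    rcases abs_choice (m : ℝ) with h | h <;> simp [h]
  simp_rw [log_pow, hcos, Nat.cast_ofNat, mul_assoc, intervalIntegral.integral_const_mul,
    integral_log_sin_half_mul_cos_nat_mul (Int.natAbs_ne_zero.mpr hm), Nat.cast_natAbs,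
    Int.cast_abs]
  field_simp
end
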